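/- In the zero-resistance limit, the droop control injection u = -K^P (L_γ^{-1} I^inj) converges as γ → 0+ to u* = -((Σ_i I_i^inj)/(Σ_i K^P_i)) K^P 1_n, which equals the optimal current-sharing solution μ F^{-1} 1_n with F^{-1} = K^P. -/

import Mathlib

/-!
Write `x_γ = (γ⁻¹ L + K)⁻¹ I` with `K = diagonal Kᴾ`. Since `L` is symmetric with kernel `ℝ 𝟙`,
its range is the hyperplane `∑ r = 0`, so for `c = ∑ I / ∑ Kᴾ` there is `z` with
`L z = I - c Kᴾ`. The remainder `f = x_γ - c 𝟙 - γ z` then solves `(γ⁻¹ L + K) f = -γ K z`;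
pairing with `f` and using `L ⪰ 0` gives `‖f‖_K ≤ γ ‖z‖_K`, so `x_γ → c 𝟙` at rate `O(γ)`.
-/

open Matrix Finset Filter
open scoped Topology

theorem tendsto_nhdsGT_zero_of_abs_sub_le {g : ℝ → ℝ} {a C : ℝ}
    (h : ∀ γ > 0, |g γ - a| ≤ γ * C) : Tendsto g (𝓝[>] 0) (𝓝 a) := by
  rw [tendsto_iff_norm_sub_tendsto_zero]
  have hlin : Tendsto (fun γ : ℝ => γ * C) (𝓝[>] 0) (𝓝 0) :=
    ((continuous_mul_const C).tendsto' 0 0 (zero_mul C)).mono_left nhdsWithin_le_nhds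
  exact squeeze_zero' (Eventually.of_forall fun _ => norm_nonneg _)
    (eventually_mem_nhdsWithin.mono h) hlin

namespace Matrix

variable {ι : Type*} [Fintype ι]

theorem sum_mulVec_eq_zero {L : Matrix ι ι ℝ} (hL : Lᵀ = L) (h1 : L *ᵥ (fun _ => 1) = 0)
    (v : ι → ℝ) : ∑ i, (L *ᵥ v) i = 0 := by
  have : (fun _ => (1 : ℝ)) ⬝ᵥ L *ᵥ v = 0 := by
    rw [dotProduct_mulVec, ← hL, vecMul_transpose, h1, zero_dotProduct]
  simpa [dotProduct] using this

theorem exists_mulVec_eq_of_sum_eq_zero [DecidableEq ι] [Nonempty ι] {L : Matrix ι ι ℝ}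
    (hL : Lᵀ = L) (hker : ∀ v : ι → ℝ, L *ᵥ v = 0 ↔ ∃ c : ℝ, v = fun _ => c)
    {r : ι → ℝ} (hr : ∑ i, r i = 0) : ∃ z, L *ᵥ z = r := by
  have h1 : L *ᵥ (fun _ => 1) = 0 := (hker _).2 ⟨1, rfl⟩
  -- `L + 𝟙𝟙ᵀ` is invertible: summing the coordinates of `(L + 𝟙𝟙ᵀ) v` kills `L v`
  set J : Matrix ι ι ℝ := of fun _ _ => 1
  have hJ : ∀ v, J *ᵥ v = fun _ => ∑ i, v i := fun v => by ext; simp [J, mulVec, dotProduct]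
  have hsum : ∀ v, ∑ i, ((L + J) *ᵥ v) i = Fintype.card ι * ∑ i, v i := fun v => by
    simp [add_mulVec, sum_add_distrib, sum_mulVec_eq_zero hL h1, hJ]
  have hcard : (Fintype.card ι : ℝ) ≠ 0 := by positivity
  have hinj : Function.Injective (L + J).mulVec := by
    rw [← coe_mulVecLin, injective_iff_map_eq_zero]
    intro v hv
    rw [mulVecLin_apply] at hv
    have hv0 : ∑ i, v i = 0 := by
      simpa [hv, hcard] using (hsum v).symm
    rw [add_mulVec, hJ, hv0, ← Pi.zero_def, add_zero] at hv
    obtain ⟨c, rfl⟩ := (hker v).1 hv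
    funext
    simpa [hcard] using hv0
  obtain ⟨z, hz⟩ := mulVec_surjective_iff_isUnit.2 (mulVec_injective_iff_isUnit.1 hinj) r
  have hz0 : ∑ i, z i = 0 := by
    simpa [hsum, hr, hcard] using congrArg (fun v => ∑ i, v i) hz
  rw [add_mulVec, hJ, hz0, ← Pi.zero_def, add_zero] at hz
  exact ⟨z, hz⟩

theorem PosSemidef.sum_mul_sq_le_of_add_diagonal_mulVec_eq [DecidableEq ι] {L : Matrix ι ι ℝ}
    (hL : L.PosSemidef) {k f w : ι → ℝ} (hk : ∀ i, 0 ≤ k i)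
    (h : (L + diagonal k) *ᵥ f = diagonal k *ᵥ w) :
    ∑ i, k i * f i ^ 2 ≤ ∑ i, k i * w i ^ 2 := by
  have hLf : 0 ≤ f ⬝ᵥ L *ᵥ f := by simpa using hL.dotProduct_mulVec_nonneg f
  have hdot : f ⬝ᵥ L *ᵥ f + ∑ i, k i * f i ^ 2 = ∑ i, k i * (f i * w i) :=
    calc f ⬝ᵥ L *ᵥ f + ∑ i, k i * f i ^ 2 = f ⬝ᵥ L *ᵥ f + f ⬝ᵥ diagonal k *ᵥ f := by
          simp [dotProduct, mulVec_diagonal, sq, mul_left_comm]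
      _ = f ⬝ᵥ diagonal k *ᵥ w := by rw [← dotProduct_add, ← add_mulVec, h]
      _ = ∑ i, k i * (f i * w i) := by simp [dotProduct, mulVec_diagonal, mul_left_comm]
  have hamgm : 2 * ∑ i, k i * (f i * w i) ≤ ∑ i, k i * f i ^ 2 + ∑ i, k i * w i ^ 2 := by
    rw [mul_sum, ← sum_add_distrib]
    refine sum_le_sum fun i _ => ?_
    nlinarith [mul_nonneg (hk i) (sq_nonneg (f i - w i))]
  linarith

theorem PosSemidef.abs_inv_one_div_smul_add_diagonal_mulVec_sub_le [DecidableEq ι]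
    {L : Matrix ι ι ℝ} (hL : L.PosSemidef) (h1 : L *ᵥ (fun _ => 1) = 0)
    {k : ι → ℝ} (hk : ∀ i, 0 < k i) {b z : ι → ℝ} {c : ℝ} (hz : L *ᵥ z = b - c • k)
    {γ : ℝ} (hγ : 0 < γ) (j : ι) :
    |(((1 / γ) • L + diagonal k)⁻¹ *ᵥ b) j - c| ≤
      γ * (|z j| + √((∑ i, k i * z i ^ 2) / k j)) := by
  set A := (1 / γ) • L + diagonal k
  set S := ∑ i, k i * z i ^ 2
  have hLγ : ((1 / γ) • L).PosSemidef := hL.smul (by positivity)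
  have hA : A.PosDef := PosDef.posSemidef_add hLγ (posDef_diagonal_iff.2 hk)
  set x := A⁻¹ *ᵥ b
  have hx : A *ᵥ x = b := by
    rw [mulVec_mulVec, mul_nonsing_inv _ ((isUnit_iff_isUnit_det A).1 hA.isUnit), one_mulVec]
  have hA1 : A *ᵥ (fun _ => 1) = k := by
    ext i
    simp [A, add_mulVec, smul_mulVec, h1, mulVec_diagonal]
  have hAz : A *ᵥ z = (1 / γ) • (b - c • k) + diagonal k *ᵥ z := by
    rw [add_mulVec, smul_mulVec, hz]
  set f := x - c • (fun _ => 1) - γ • z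
  have hf : A *ᵥ f = diagonal k *ᵥ (-γ • z) := by
    simp only [f, mulVec_sub, mulVec_smul, hx, hA1, hAz]
    rw [smul_add, smul_smul, mul_one_div_cancel hγ.ne', one_smul]
    module
  have hweighted_f : k j * f j ^ 2 ≤ γ ^ 2 * S :=
    calc k j * f j ^ 2 ≤ ∑ i, k i * f i ^ 2 :=
          single_le_sum (f := fun i => k i * f i ^ 2)
            (fun i _ => mul_nonneg (hk i).le (sq_nonneg _)) (mem_univ j)
      _ ≤ ∑ i, k i * (-γ • z) i ^ 2 :=
          hLγ.sum_mul_sq_le_of_add_diagonal_mulVec_eq (fun i => (hk i).le) hf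
      _ = γ ^ 2 * S := by
          simp only [S, mul_sum, Pi.smul_apply, smul_eq_mul]
          congr! 1
          ring
  have habs_f : |f j| ≤ γ * √(S / k j) := by
    rw [← Real.sqrt_sq hγ.le, ← Real.sqrt_mul (sq_nonneg _)]
    apply Real.abs_le_sqrt
    rw [mul_div_assoc', le_div_iff₀ (hk j)]
    linarith
  have hxj : x j - c = γ * z j + f j := by simp [f]
  calc |x j - c| ≤ |γ * z j| + |f j| := hxj ▸ abs_add_le _ _
    _ ≤ γ * (|z j| + √(S / k j)) := by
        rw [abs_mul, abs_of_pos hγ]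
        linarith

theorem tendsto_inv_one_div_smul_add_diagonal_mulVec [DecidableEq ι] [Nonempty ι]
    {L : Matrix ι ι ℝ} (hL : L.PosSemidef)
    (hker : ∀ v : ι → ℝ, L *ᵥ v = 0 ↔ ∃ c : ℝ, v = fun _ => c)
    {k : ι → ℝ} (hk : ∀ i, 0 < k i) (b : ι → ℝ) :
    Tendsto (fun γ : ℝ => ((1 / γ) • L + diagonal k)⁻¹ *ᵥ b) (𝓝[>] 0)
      (𝓝 fun _ => (∑ i, b i) / ∑ i, k i) := by
  set c := (∑ i, b i) / ∑ i, k i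
  have hLT : Lᵀ = L := by simpa [conjTranspose_eq_transpose_of_trivial] using hL.isHermitian.eq
  have h1 : L *ᵥ (fun _ => 1) = 0 := (hker _).2 ⟨1, rfl⟩
  have hksum : 0 < ∑ i, k i := sum_pos (fun i _ => hk i) univ_nonempty
  obtain ⟨z, hz⟩ : ∃ z, L *ᵥ z = b - c • k := by
    refine exists_mulVec_eq_of_sum_eq_zero hLT hker ?_
    simp only [Pi.sub_apply, Pi.smul_apply, smul_eq_mul, sum_sub_distrib, ← mul_sum]
    rw [div_mul_cancel₀ _ hksum.ne', sub_self]
  rw [tendsto_pi_nhds]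
  intro j
  exact tendsto_nhdsGT_zero_of_abs_sub_le fun γ hγ =>
    hL.abs_inv_one_div_smul_add_diagonal_mulVec_sub_le h1 hk hz hγ j

theorem inv_diagonal_inv [DecidableEq ι] {K : Type*} [Field K] {k : ι → K}
    (hk : ∀ i, k i ≠ 0) :
    (diagonal fun i => (k i)⁻¹)⁻¹ = diagonal k :=
  inv_eq_left_inv <| by
    rw [diagonal_mul_diagonal, ← diagonal_one]
    exact congrArg diagonal (funext fun i => mul_inv_cancel₀ (hk i))
end Matrix

/-- In the zero-resistance limit the droop injection `u = -Kᴾ (L_γ⁻¹ I)` converges to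
`u* = -((∑ I i)/(∑ Kᴾ i)) Kᴾ 1ₙ`, which equals the optimal sharing solution
`μ F⁻¹ 1ₙ` with `F⁻¹ = Kᴾ`. -/
theorem stmt7 (n : ℕ) (hn : 0 < n) (L : Matrix (Fin n) (Fin n) ℝ)
    (hLpsd : L.PosSemidef)
    (hker : ∀ v : Fin n → ℝ, L *ᵥ v = 0 ↔ ∃ c : ℝ, v = fun _ => c)
    (kp : Fin n → ℝ) (hkp : ∀ i, 0 < kp i)
    (Iinj : Fin n → ℝ) :
    letI μ : ℝ := -(∑ i, Iinj i) / (∑ i, kp i)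
    letI ustar : Fin n → ℝ := fun i => μ * kp i
    Tendsto
        (fun γ : ℝ =>
          -(Matrix.diagonal kp *ᵥ (((1 / γ) • L + Matrix.diagonal kp)⁻¹ *ᵥ Iinj)))
        (nhdsWithin 0 (Set.Ioi 0)) (nhds ustar) ∧
      ustar = μ • ((Matrix.diagonal fun i => (kp i)⁻¹)⁻¹ *ᵥ fun _ : Fin n => 1) := by
  have : Nonempty (Fin n) := ⟨⟨0, hn⟩⟩
  have hx := tendsto_inv_one_div_smul_add_diagonal_mulVec hLpsd hker hkp Iinj
  have hdroop : Continuous fun v : Fin n → ℝ => -(diagonal kp *ᵥ v) :=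
    (continuous_const.matrix_mulVec continuous_id).neg
  refine ⟨?_, ?_⟩
  · have hustar : (fun i => (-(∑ i, Iinj i) / ∑ i, kp i) * kp i) =
        -(diagonal kp *ᵥ fun _ => (∑ i, Iinj i) / ∑ i, kp i) := by
      ext i
      simp only [mulVec_diagonal, Pi.neg_apply]
      ring
    exact hustar ▸ (hdroop.tendsto _).comp hx
  · rw [inv_diagonal_inv fun i => (hkp i).ne']
    ext i
    simp [mulVec_diagonal]
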